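/- arXiv:1906.12014 — 3 statements merged into one kernel-verified Lean document; each statement's English description precedes it below -/
import Mathlib

section
/- For β > 0 and λ ∈ ℝ, the Riemann–Liouville fractional derivative of order ⌈β⌉ − β applied to the function t ↦ t^(⌈β⌉−1) E_{β,⌈β⌉}(λ t^β) equals t^(β−1) E_{β,β}(λ t^β) for all t > 0, where E_{β,μ}(z) = Σ_{ℓ=0}^∞ z^ℓ / Γ(βℓ + μ) is the Mittag-Leffler function. -/
open Real MeasureTheory intervalIntegral

/-- Mittag-Leffler function `E_{β,μ}(z) = Σ_ℓ z^ℓ / Γ(βℓ+μ)`. -/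
noncomputable def mittagLeffler (β μ z : ℝ) : ℝ :=
  ∑' ℓ : ℕ, z ^ ℓ / Real.Gamma (β * ℓ + μ)

/-- Riemann–Liouville fractional integral `J^γ` of order `γ ∈ [0,1]` (with `J^0 = id`). -/
noncomputable def RLint (γ : ℝ) (f : ℝ → ℝ) (t : ℝ) : ℝ :=
  if γ = 0 then f t
  else (1 / Real.Gamma γ) * ∫ s in (0:ℝ)..t, f s / (t - s) ^ (1 - γ)

/-- Riemann–Liouville fractional derivative `D^δ = d/dt ∘ J^{1-δ}` of order `δ ∈ [0,1)`
(with `D^0 = id`). -/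
noncomputable def RLderiv (δ : ℝ) (f : ℝ → ℝ) (t : ℝ) : ℝ :=
  if δ = 0 then f t else deriv (RLint (1 - δ) f) t

open Filter Set Topology

/-!
Write `F_μ(t) = t^(μ-1) E_{β,μ}(λ t^β) = Σ_ℓ λ^ℓ t^(βℓ+μ-1) / Γ(βℓ+μ)`. Integrating term by term
with the beta integral gives `J^γ F_μ = F_{μ+γ}`, and differentiating term by term gives
`(F_{μ+1})' = F_μ`. Hence, with `ν = ⌈β⌉`, `D^{ν-β} F_ν = (J^{1-ν+β} F_ν)' = (F_{β+1})' = F_β`.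
Both interchanges rest on the convergence of `Σ |z|^ℓ / Γ(βℓ+μ)`, which is the ratio test together
with `Γ(y+β) ≥ (y-1)^β Γ(y)`, a consequence of the log-convexity of `Γ`.
-/

theorem integral_rpow_mul_sub_rpow {a b x : ℝ} (ha : 0 < a) (hb : 0 < b) (hx : 0 < x) :
    ∫ s in 0..x, s ^ (a - 1) * (x - s) ^ (b - 1)
      = Gamma a * Gamma b / Gamma (a + b) * x ^ (a + b - 1) := by
  apply Complex.ofReal_injective
  have hcpow : EqOn (fun s : ℝ => ((s ^ (a - 1) * (x - s) ^ (b - 1) : ℝ) : ℂ))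
      (fun s : ℝ => (s : ℂ) ^ ((a : ℂ) - 1) * ((x : ℂ) - s) ^ ((b : ℂ) - 1)) (uIcc 0 x) := by
    intro s hs
    rw [uIcc_of_le hx.le] at hs
    push_cast [Complex.ofReal_cpow hs.1, Complex.ofReal_cpow (sub_nonneg.2 hs.2)]
    rfl
  rw [← intervalIntegral.integral_ofReal, integral_congr hcpow, Complex.betaIntegral_scaled _ _ hx,
    Complex.betaIntegral_eq_Gamma_mul_div _ _ (by simpa) (by simpa)]
  push_cast [← Complex.Gamma_ofReal, Complex.ofReal_cpow hx.le]
  ring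

theorem intervalIntegrable_rpow_mul_sub_rpow {a b x : ℝ} (ha : 0 < a) (hb : 0 < b) (hx : 0 < x) :
    IntervalIntegrable (fun s => s ^ (a - 1) * (x - s) ^ (b - 1)) volume 0 x :=
  -- a non-integrable function has integral `0`
  intervalIntegrable_of_integral_ne_zero <| by
    rw [integral_rpow_mul_sub_rpow ha hb hx]
    positivity

theorem Real.Gamma_mul_sub_one_rpow_le_Gamma_add {β y : ℝ} (hβ : 0 < β) (hy : 1 < y) :
    Gamma y * (y - 1) ^ β ≤ Gamma (y + β) := by
  have hy1 : 0 < y - 1 := sub_pos.2 hy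
  have hΓy : 0 < Gamma y := Gamma_pos_of_pos (by linarith)
  have hlog : log (Gamma y) - log (Gamma (y - 1)) = log (y - 1) := by
    have hrec : Gamma y = (y - 1) * Gamma (y - 1) := by simpa using Gamma_add_one hy1.ne'
    rw [hrec, log_mul hy1.ne' (Gamma_pos_of_pos hy1).ne', add_sub_cancel_right]
  have hslope := convexOn_log_Gamma.slope_mono_adjacent (mem_Ioi.2 hy1)
    (mem_Ioi.2 (by linarith : 0 < y + β)) (by linarith : y - 1 < y) (by linarith : y < y + β)
  simp only [Function.comp_apply, sub_sub_cancel, add_sub_cancel_left, div_one, hlog,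
    le_div_iff₀ hβ] at hslope
  rw [← log_le_log_iff (by positivity) (Gamma_pos_of_pos (by linarith)),
    log_mul hΓy.ne' (by positivity), log_rpow hy1]
  linarith

theorem summable_mittagLeffler {β : ℝ} (hβ : 0 < β) (μ z : ℝ) :
    Summable fun ℓ : ℕ => z ^ ℓ / Gamma (β * ℓ + μ) := by
  refine summable_of_ratio_norm_eventually_le (r := 1 / 2) (by norm_num) ?_
  have hlin : Tendsto (fun ℓ : ℕ => β * ℓ + μ) atTop atTop :=
    tendsto_atTop_add_const_right _ μ (tendsto_natCast_atTop_atTop.const_mul_atTop hβ)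
  have hpow : Tendsto (fun ℓ : ℕ => (β * ℓ + μ - 1) ^ β) atTop atTop :=
    (tendsto_rpow_atTop hβ).comp (tendsto_atTop_add_const_right _ (-1) hlin)
  filter_upwards [hlin.eventually_gt_atTop 1, hpow.eventually_ge_atTop (2 * (|z| + 1))]
    with ℓ hy hgrowth
  have hΓ : 0 < Gamma (β * ℓ + μ) := Gamma_pos_of_pos (by linarith)
  have hratio : Gamma (β * ℓ + μ) * (2 * (|z| + 1)) ≤ Gamma (β * ↑(ℓ + 1) + μ) := by
    rw [show β * ↑(ℓ + 1) + μ = β * ℓ + μ + β by push_cast; ring]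
    exact (mul_le_mul_of_nonneg_left hgrowth hΓ.le).trans
      (Gamma_mul_sub_one_rpow_le_Gamma_add hβ hy)
  have hΓsucc : 0 < Gamma (β * ↑(ℓ + 1) + μ) := by
    have : 0 < Gamma (β * ℓ + μ) * (2 * (|z| + 1)) := by positivity
    exact this.trans_le hratio
  rw [norm_div, norm_div, norm_pow, norm_pow, Real.norm_of_nonneg hΓ.le,
    Real.norm_of_nonneg hΓsucc.le, Real.norm_eq_abs]
  calc |z| ^ (ℓ + 1) / Gamma (β * ↑(ℓ + 1) + μ)
      ≤ |z| ^ (ℓ + 1) / (Gamma (β * ℓ + μ) * (2 * (|z| + 1))) := by gcongr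
    _ = |z| / (2 * (|z| + 1)) * (|z| ^ ℓ / Gamma (β * ℓ + μ)) := by field_simp; ring
    _ ≤ 1 / 2 * (|z| ^ ℓ / Gamma (β * ℓ + μ)) := by
      gcongr ?_ * _
      rw [div_le_iff₀ (by positivity)]
      linarith [abs_nonneg z]

theorem hasSum_rpow_mul_mittagLeffler {β : ℝ} (hβ : 0 < β) (μ lam : ℝ) {x : ℝ} (hx : 0 < x) :
    HasSum (fun ℓ : ℕ => lam ^ ℓ / Gamma (β * ℓ + μ) * x ^ (β * ℓ + μ - 1))
      (x ^ (μ - 1) * mittagLeffler β μ (lam * x ^ β)) := by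
  refine ((summable_mittagLeffler hβ μ (lam * x ^ β)).hasSum.mul_left (x ^ (μ - 1))).congr_fun
    fun ℓ => ?_
  rw [add_sub_assoc, rpow_add hx, rpow_mul_natCast hx.le, mul_pow]
  ring

theorem hasDerivAt_rpow_mul_mittagLeffler {β μ : ℝ} (hβ : 0 < β) (hμ : 0 < μ) (lam : ℝ) {t : ℝ}
    (ht : 0 < t) :
    HasDerivAt (fun x => x ^ μ * mittagLeffler β (μ + 1) (lam * x ^ β))
      (t ^ (μ - 1) * mittagLeffler β μ (lam * t ^ β)) t := by
  have hexp : ∀ ℓ : ℕ, 0 < β * ℓ + μ := fun ℓ => by positivity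
  have hsum : ∀ x, 0 < x →
      HasSum (fun ℓ : ℕ => lam ^ ℓ / Gamma (β * ℓ + μ + 1) * x ^ (β * ℓ + μ))
        (x ^ μ * mittagLeffler β (μ + 1) (lam * x ^ β)) := fun x hx => by
    simpa only [← add_assoc, add_sub_cancel_right] using
      hasSum_rpow_mul_mittagLeffler hβ (μ + 1) lam hx
  have hderiv : ∀ (ℓ : ℕ) x, 0 < x → HasDerivAt
      (fun x => lam ^ ℓ / Gamma (β * ℓ + μ + 1) * x ^ (β * ℓ + μ))
      (lam ^ ℓ / Gamma (β * ℓ + μ) * x ^ (β * ℓ + μ - 1)) x := fun ℓ x hx => by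
    refine ((hasDerivAt_rpow_const (p := β * ℓ + μ) (Or.inl hx.ne')).const_mul
      (lam ^ ℓ / Gamma (β * ℓ + μ + 1))).congr_deriv ?_
    rw [Gamma_add_one (hexp ℓ).ne']
    field_simp
  obtain ⟨C, hC⟩ := isCompact_Icc.exists_bound_of_continuousOn (f := fun y : ℝ => y ^ (μ - 1))
    (s := Icc (t / 2) (2 * t))
    (continuousOn_id.rpow_const fun y hy => Or.inl ((half_pos ht).trans_le hy.1).ne')
  have hbound : ∀ (ℓ : ℕ) y, y ∈ Ioo (t / 2) (2 * t) →
      ‖lam ^ ℓ / Gamma (β * ℓ + μ) * y ^ (β * ℓ + μ - 1)‖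
        ≤ C * ((|lam| * (2 * t) ^ β) ^ ℓ / Gamma (β * ℓ + μ)) := fun ℓ y hy => by
    have hy0 : 0 < y := (half_pos ht).trans hy.1
    have hΓ := Gamma_pos_of_pos (hexp ℓ)
    have hyμ : y ^ (μ - 1) ≤ C := (le_abs_self _).trans (hC y (Ioo_subset_Icc_self hy))
    have hyβ : y ^ β ≤ (2 * t) ^ β := rpow_le_rpow hy0.le hy.2.le hβ.le
    rw [add_sub_assoc, rpow_add hy0, rpow_mul_natCast hy0.le, norm_mul, norm_div, norm_pow,
      Real.norm_eq_abs, Real.norm_of_nonneg hΓ.le, Real.norm_of_nonneg (by positivity)]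
    calc |lam| ^ ℓ / Gamma (β * ℓ + μ) * ((y ^ β) ^ ℓ * y ^ (μ - 1))
        ≤ |lam| ^ ℓ / Gamma (β * ℓ + μ) * (((2 * t) ^ β) ^ ℓ * C) := by gcongr
      _ = C * ((|lam| * (2 * t) ^ β) ^ ℓ / Gamma (β * ℓ + μ)) := by ring
  have ht_mem : t ∈ Ioo (t / 2) (2 * t) := ⟨by linarith, by linarith⟩
  have hts := hasDerivAt_tsum_of_isPreconnected ((summable_mittagLeffler hβ μ _).mul_left C)
    isOpen_Ioo isPreconnected_Ioo (fun ℓ y hy => hderiv ℓ y ((half_pos ht).trans hy.1))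
    hbound ht_mem (hsum t ht).summable ht_mem
  rw [(hasSum_rpow_mul_mittagLeffler hβ μ lam ht).tsum_eq] at hts
  refine hts.congr_of_eventuallyEq ?_
  filter_upwards [Ioi_mem_nhds ht] with x hx
  exact (hsum x hx).tsum_eq.symm

theorem RLint_rpow_mul_mittagLeffler {β μ γ : ℝ} (hβ : 0 < β) (hμ : 0 < μ) (hγ : 0 < γ)
    (lam : ℝ) {x : ℝ} (hx : 0 < x) :
    RLint γ (fun s => s ^ (μ - 1) * mittagLeffler β μ (lam * s ^ β)) x
      = x ^ (μ + γ - 1) * mittagLeffler β (μ + γ) (lam * x ^ β) := by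
  set term : ℝ → ℕ → ℝ → ℝ := fun c ℓ s =>
    c ^ ℓ / Gamma (β * ℓ + μ) * (s ^ (β * ℓ + μ - 1) * (x - s) ^ (γ - 1)) with hterm
  have hexp : ∀ ℓ : ℕ, 0 < β * ℓ + μ := fun ℓ => by positivity
  have hint : ∀ c ℓ, IntegrableOn (term c ℓ) (Ioc 0 x) := fun c ℓ =>
    ((intervalIntegrable_iff_integrableOn_Ioc_of_le hx.le).1
      (intervalIntegrable_rpow_mul_sub_rpow (hexp ℓ) hγ hx)).const_mul _
  have hval : ∀ c ℓ, ∫ s in Ioc 0 x, term c ℓ s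
      = Gamma γ * (c ^ ℓ / Gamma (β * ℓ + (μ + γ)) * x ^ (β * ℓ + (μ + γ) - 1)) := fun c ℓ => by
    rw [MeasureTheory.integral_const_mul, ← integral_of_le hx.le,
      integral_rpow_mul_sub_rpow (hexp ℓ) hγ hx, ← add_assoc]
    field_simp
  have hnorm : ∀ ℓ, ∫ s in Ioc 0 x, ‖term lam ℓ s‖ = ∫ s in Ioc 0 x, term |lam| ℓ s :=
    fun ℓ => setIntegral_congr_fun measurableSet_Ioc fun s hs => by
      have hΓ := Gamma_pos_of_pos (hexp ℓ)
      have hxs := sub_nonneg.2 hs.2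
      have hs0 := hs.1
      rw [hterm, norm_mul, norm_div, norm_pow, Real.norm_eq_abs, Real.norm_of_nonneg hΓ.le,
        Real.norm_of_nonneg (by positivity)]
  have hpoint : ∀ s ∈ Ioc 0 x, ∑' ℓ, term lam ℓ s
      = s ^ (μ - 1) * mittagLeffler β μ (lam * s ^ β) / (x - s) ^ (1 - γ) := fun s hs => by
    rw [div_eq_mul_inv, ← rpow_neg (sub_nonneg.2 hs.2), neg_sub]
    simp only [hterm, ← mul_assoc]
    exact ((hasSum_rpow_mul_mittagLeffler hβ μ lam hs.1).mul_right _).tsum_eq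
  have hML := (hasSum_rpow_mul_mittagLeffler hβ (μ + γ) lam hx).mul_left (Gamma γ)
  rw [RLint, if_neg hγ.ne', integral_of_le hx.le,
    ← setIntegral_congr_fun measurableSet_Ioc hpoint,
    ← integral_tsum_of_summable_integral_norm (hint lam) ?_, tsum_congr (hval lam), hML.tsum_eq]
  · field_simp
  · simp_rw [hnorm, hval]
    exact ((hasSum_rpow_mul_mittagLeffler hβ (μ + γ) |lam| hx).mul_left _).summable

/-- Lemma 2.1: for `β > 0` and `λ ∈ ℝ`,
`D_t^{⌈β⌉-β} (t^{⌈β⌉-1} E_{β,⌈β⌉}(λ t^β)) = t^{β-1} E_{β,β}(λ t^β)` for `t > 0`. -/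
theorem RLderiv_mittagLeffler (β lam : ℝ) (hβ : 0 < β) :
    ∀ t : ℝ, 0 < t →
      RLderiv ((⌈β⌉ : ℝ) - β)
          (fun τ => τ ^ ((⌈β⌉ : ℝ) - 1) * mittagLeffler β (⌈β⌉ : ℝ) (lam * τ ^ β)) t
        = t ^ (β - 1) * mittagLeffler β β (lam * t ^ β) := by
  intro t ht
  have hceil : (0 : ℝ) < ⌈β⌉ := by exact_mod_cast Int.ceil_pos.2 hβ
  have hγ : 0 < 1 - ((⌈β⌉ : ℝ) - β) := by linarith [Int.ceil_lt_add_one β]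
  unfold RLderiv
  split_ifs with hδ
  · rw [show (⌈β⌉ : ℝ) = β by linarith [sub_eq_zero.1 hδ]]
  · have hJ : RLint (1 - ((⌈β⌉ : ℝ) - β))
        (fun τ => τ ^ ((⌈β⌉ : ℝ) - 1) * mittagLeffler β (⌈β⌉ : ℝ) (lam * τ ^ β))
        =ᶠ[𝓝 t] fun x => x ^ β * mittagLeffler β (β + 1) (lam * x ^ β) := by
      filter_upwards [Ioi_mem_nhds ht] with x hx
      rw [RLint_rpow_mul_mittagLeffler hβ hceil hγ lam hx,
        show (⌈β⌉ : ℝ) + (1 - (⌈β⌉ - β)) = β + 1 by ring, add_sub_cancel_right]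
    rw [hJ.deriv_eq, (hasDerivAt_rpow_mul_mittagLeffler hβ hβ lam ht).deriv]
end

section
/- Differentiation-under-the-integral formula in the fractional Duhamel proof: for non-integer β ∈ (0,1) and smooth v(t;s) with v(s;s) = F(s), the function u(t) = ∫_0^t D_t^{1−β} v(t;s) ds satisfies u'(t) = D_t^{1−β} F(t) + ∫_0^t D_t^{1−β} ∂_t v(t;s) ds, where D_t^{1−β} w(t;s) := (1/Γ(β)) ∂_t ∫_s^t w(r;s)(t−r)^{β−1} dr. -/
open Real MeasureTheory intervalIntegral Set Filter Metric
open scoped Topology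

-- measurability of rpow const
lemma measurable_rpow_const' (y : ℝ) : Measurable fun x : ℝ => x ^ y := by
  refine measurable_of_continuousOn_compl_singleton 0 ?_
  intro x hx
  exact ((Real.continuousAt_rpow_const x y (Or.inl hx)).continuousWithinAt)

lemma uIcc_abs_le {t τ u : ℝ} (hu : u ∈ Set.uIcc t τ) : |u - t| ≤ |τ - t| := by
  rcases Set.mem_uIcc.1 hu with h | h
  · rw [abs_sub_le_iff]; constructor <;> [skip; skip] <;>
    · cases' abs_cases (τ - t) with hc hc <;> linarith [hc.1, hc.2]
  · rw [abs_sub_le_iff]; constructor <;>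
    · cases' abs_cases (τ - t) with hc hc <;> linarith [hc.1, hc.2]

lemma hasDerivAt_zero_of_bound (f : ℝ → ℝ → ℝ) (t C : ℝ)
    (h : ∀ᶠ τ in 𝓝 t, ∀ u ∈ Set.uIoc t τ, |f τ u| ≤ C * |τ - t|) :
    HasDerivAt (fun τ => ∫ u in t..τ, f τ u) 0 t := by
  rw [hasDerivAt_iff_isLittleO]
  have h1 : (fun τ : ℝ => (∫ u in t..τ, f τ u)) =O[𝓝 t] fun τ => (τ - t) * (τ - t) := by
    rw [Asymptotics.isBigO_iff]
    refine ⟨C, ?_⟩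
    filter_upwards [h] with τ hτ
    have := intervalIntegral.norm_integral_le_of_norm_le_const
      (C := C * |τ - t|) (f := fun u => f τ u) (a := t) (b := τ) (fun u hu => by
        simpa using hτ u hu)
    calc ‖∫ u in t..τ, f τ u‖ ≤ C * |τ - t| * |τ - t| := by
          simpa [abs_sub_comm] using this
      _ ≤ C * ‖(τ - t) * (τ - t)‖ := by
          rw [norm_mul]; simp [mul_assoc, Real.norm_eq_abs]
  have h2 : (fun τ : ℝ => (τ - t) * (τ - t)) =o[𝓝 t] fun τ => τ - t := by
    have ht : Filter.Tendsto (fun τ : ℝ => τ - t) (𝓝 t) (𝓝 0) := by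
      simpa using (continuous_sub_right t).tendsto t
    have := (Asymptotics.isLittleO_one_iff ℝ).2 ht
    simpa using this.mul_isBigO (Asymptotics.isBigO_refl (fun τ : ℝ => τ - t) (𝓝 t))
  simpa [intervalIntegral.integral_same] using h1.trans_isLittleO h2

lemma hasDerivAt_boundary (φ : ℝ → ℝ → ℝ) (t C ε : ℝ) (hε : 0 < ε)
    (hcont : ContinuousOn (fun p : ℝ × ℝ => φ p.1 p.2) (Metric.ball (t, t) ε))
    (hlip : ∀ τ ∈ Metric.ball t ε, ∀ u ∈ Set.uIoc t τ, |φ τ u - φ t u| ≤ C * |τ - t|) :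
    HasDerivAt (fun τ => ∫ u in t..τ, φ τ u) (φ t t) t := by
  have hmem : ∀ τ ∈ Metric.ball t ε, ∀ u ∈ Set.uIcc t τ, (τ, u) ∈ Metric.ball (t, t) ε := by
    intro τ hτ u hu
    rw [Metric.mem_ball] at hτ ⊢
    rw [Prod.dist_eq]
    refine max_lt hτ ?_
    have := uIcc_abs_le hu
    calc dist u t = |u - t| := Real.dist_eq u t
      _ ≤ |τ - t| := this
      _ < ε := by simpa [Real.dist_eq] using hτ
  have hself : (t, t) ∈ Metric.ball (t, t) ε := Metric.mem_ball_self hε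
  have hmapt : ∀ u ∈ Metric.ball t ε, ((t : ℝ), u) ∈ Metric.ball (t, t) ε := by
    intro u hu
    rw [Metric.mem_ball] at hu ⊢
    rw [Prod.dist_eq]
    exact max_lt (by simpa using hε) hu
  have hφt_cont : ContinuousOn (φ t) (Metric.ball t ε) := by
    have : ContinuousOn (fun u : ℝ => ((t : ℝ), u)) (Metric.ball t ε) :=
      (continuous_const.prodMk continuous_id).continuousOn
    exact fun u hu => ((hcont ((t : ℝ), u) (hmapt u hu)).comp (this u hu) (fun x hx => hmapt x hx))
  -- f1
  have hf1 : HasDerivAt (fun τ => ∫ u in t..τ, φ t u) (φ t t) t := by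
    refine intervalIntegral.integral_hasDerivAt_right ?_ ?_ ?_
    · exact IntervalIntegrable.refl
    · exact ⟨Metric.ball t ε, Metric.ball_mem_nhds t hε,
        hφt_cont.aestronglyMeasurable measurableSet_ball⟩
    · exact hφt_cont.continuousAt (Metric.ball_mem_nhds t hε)
  -- f2
  have hf2 : HasDerivAt (fun τ => ∫ u in t..τ, (φ τ u - φ t u)) 0 t := by
    refine hasDerivAt_zero_of_bound _ t C ?_
    filter_upwards [Metric.ball_mem_nhds t hε] with τ hτ u hu
    exact hlip τ hτ u hu
  have heq : ∀ᶠ τ in 𝓝 t, (fun τ => ∫ u in t..τ, φ τ u) τ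
      = (fun τ => (∫ u in t..τ, φ t u) + ∫ u in t..τ, (φ τ u - φ t u)) τ := by
    filter_upwards [Metric.ball_mem_nhds t hε] with τ hτ
    have hIτ : IntervalIntegrable (fun u => φ τ u) volume t τ := by
      apply ContinuousOn.intervalIntegrable
      intro u hu
      exact ((hcont (τ, u) (hmem τ hτ u hu)).comp
        ((continuous_const.prodMk continuous_id).continuousOn u hu)
        (fun x hx => hmem τ hτ x hx))
    have hIt : IntervalIntegrable (fun u => φ t u) volume t τ := by
      apply ContinuousOn.intervalIntegrable
      intro u hu
      exact (hφt_cont.mono (fun x hx => by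
        have := hmem τ hτ x hx
        rw [Metric.mem_ball] at this ⊢
        exact lt_of_le_of_lt (le_max_right _ _) (by simpa [Prod.dist_eq] using this))) u hu
    rw [← intervalIntegral.integral_add hIt (hIτ.sub hIt)]
    congr 1
    ext u
    ring
  have := (hf1.add hf2).congr_of_eventuallyEq heq
  simpa using this

lemma contDiff_deriv_fst (w : ℝ → ℝ → ℝ) (hw : ContDiff ℝ (⊤ : ℕ∞) (fun p : ℝ × ℝ => w p.1 p.2)) :
    ContDiff ℝ (⊤ : ℕ∞) (fun p : ℝ × ℝ => deriv (fun x => w x p.2) p.1) := by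
  have h : (fun p : ℝ × ℝ => deriv (fun x => w x p.2) p.1)
      = fun p : ℝ × ℝ => fderiv ℝ (fun x => w x p.2) p.1 (1 : ℝ) := by
    funext p; rw [fderiv_apply_one_eq_deriv]
  rw [h]
  refine ContDiff.fderiv_apply (m := ((⊤ : ℕ∞) : WithTop ℕ∞)) (f := fun (p : ℝ × ℝ) (x : ℝ) => w x p.2)
    (g := fun p : ℝ × ℝ => p.1) (k := fun _ => (1 : ℝ)) ?_ ?_ ?_ ?_
  · have : (Function.uncurry fun (p : ℝ × ℝ) (x : ℝ) => w x p.2)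
        = (fun p : ℝ × ℝ => w p.1 p.2) ∘ (fun q : (ℝ × ℝ) × ℝ => (q.2, q.1.2)) := rfl
    rw [this]
    exact hw.comp (contDiff_snd.prodMk (contDiff_snd.comp (contDiff_fst : ContDiff ℝ _ (Prod.fst : (ℝ × ℝ) × ℝ → ℝ × ℝ))))
  · exact contDiff_fst
  · exact contDiff_const
  · exact_mod_cast (le_top : (⊤ : ℕ∞) + 1 ≤ ⊤)

lemma hasDerivAt_param_integral (w : ℝ → ℝ → ℝ)
    (hw : ContDiff ℝ (⊤ : ℕ∞) (fun p : ℝ × ℝ => w p.1 p.2)) (a t : ℝ) :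
    HasDerivAt (fun τ => ∫ s in a..τ, w τ s)
      (w t t + ∫ s in a..t, deriv (fun τ => w τ s) t) t := by
  have hw_cont : Continuous (fun p : ℝ × ℝ => w p.1 p.2) := hw.continuous
  have hwx_cont : ∀ x : ℝ, Continuous (w x) := fun x =>
    hw_cont.comp (continuous_const.prodMk continuous_id)
  have hwd := contDiff_deriv_fst w hw
  have hwd_cont : Continuous (fun p : ℝ × ℝ => deriv (fun x => w x p.2) p.1) := hwd.continuous
  have hdiff : ∀ (x s : ℝ), HasDerivAt (fun x => w x s) (deriv (fun x => w x s) x) x := by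
    intro x s
    have : ContDiff ℝ (⊤ : ℕ∞) (fun x => w x s) :=
      hw.comp (contDiff_id.prodMk contDiff_const)
    exact ((this.differentiable (by simp)) x).hasDerivAt
  -- part 1 : fixed endpoints
  obtain ⟨M, hM⟩ := (isCompact_Icc.prod isCompact_uIcc).exists_bound_of_continuousOn
    (f := fun p : ℝ × ℝ => deriv (fun x => w x p.2) p.1)
    (hwd_cont.continuousOn (s := Set.Icc (t - 1) (t + 1) ×ˢ Set.uIcc a t))
  have hpart1 : HasDerivAt (fun x => ∫ s in a..t, w x s)
      (∫ s in a..t, deriv (fun τ => w τ s) t) t := by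
    have := intervalIntegral.hasDerivAt_integral_of_dominated_loc_of_deriv_le
      (F := fun x s => w x s) (F' := fun x s => deriv (fun τ => w τ s) x)
      (x₀ := t) (a := a) (b := t) (bound := fun _ => M) (μ := volume)
      (s := Metric.ball t 1) (Metric.ball_mem_nhds t one_pos)
      (Filter.Eventually.of_forall fun x => (hwx_cont x).aestronglyMeasurable)
      ((hwx_cont t).intervalIntegrable a t)
      ((hwd_cont.comp (continuous_const.prodMk continuous_id)).aestronglyMeasurable)
      ?_ (intervalIntegrable_const) ?_
    · exact this.2
    · refine Filter.Eventually.of_forall fun s hs x hx => ?_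
      refine hM (x, s) ⟨?_, Set.uIoc_subset_uIcc hs⟩
      have : |x - t| < 1 := by simpa [Real.dist_eq] using hx
      constructor <;> [linarith [abs_lt.1 this |>.1]; linarith [abs_lt.1 this |>.2]]
    · exact Filter.Eventually.of_forall fun s hs x hx => hdiff x s
  -- part 2 : moving endpoint
  have hpart2 : HasDerivAt (fun τ => ∫ s in t..τ, w τ s) (w t t) t := by
    obtain ⟨K, s₀, hs₀, hK⟩ := (hw.of_le (by simp) : ContDiff ℝ 1 (fun p : ℝ × ℝ => w p.1 p.2)
      ).contDiffAt (x := ((t : ℝ), (t : ℝ))) |>.exists_lipschitzOnWith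
    obtain ⟨ε, hε, hball⟩ := Metric.mem_nhds_iff.1 hs₀
    refine hasDerivAt_boundary w t K ε hε (hw_cont.continuousOn) ?_
    intro τ hτ u hu
    have hu' : u ∈ Set.uIcc t τ := Set.uIoc_subset_uIcc hu
    have h1 : ((τ, u) : ℝ × ℝ) ∈ s₀ := by
      apply hball
      rw [Metric.mem_ball, Prod.dist_eq]
      refine max_lt (by simpa [Real.dist_eq] using hτ) ?_
      calc dist u t = |u - t| := Real.dist_eq u t
        _ ≤ |τ - t| := uIcc_abs_le hu'
        _ < ε := by simpa [Real.dist_eq] using hτ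
    have h2 : ((t, u) : ℝ × ℝ) ∈ s₀ := by
      apply hball
      rw [Metric.mem_ball, Prod.dist_eq]
      refine max_lt (by simpa using hε) ?_
      calc dist u t = |u - t| := Real.dist_eq u t
        _ ≤ |τ - t| := uIcc_abs_le hu'
        _ < ε := by simpa [Real.dist_eq] using hτ
    have := hK.dist_le_mul ((τ, u)) h1 ((t, u)) h2
    calc |w τ u - w t u| = dist ((fun p : ℝ × ℝ => w p.1 p.2) (τ, u))
          ((fun p : ℝ × ℝ => w p.1 p.2) (t, u)) := by rw [Real.dist_eq]
      _ ≤ K * dist ((τ, u) : ℝ × ℝ) ((t, u) : ℝ × ℝ) := this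
      _ = K * |τ - t| := by rw [Prod.dist_eq]; simp [Real.dist_eq]
  -- combine
  have heq : (fun τ => ∫ s in a..τ, w τ s)
      = fun τ => (∫ s in a..t, w τ s) + ∫ s in t..τ, w τ s := by
    funext τ
    rw [intervalIntegral.integral_add_adjacent_intervals
      ((hwx_cont τ).intervalIntegrable a t) ((hwx_cont τ).intervalIntegrable t τ)]
  rw [heq]
  rw [add_comm (w t t)]; exact hpart1.add hpart2

lemma ker_intervalIntegrable {β : ℝ} (hβ : 0 < β) (c a b : ℝ) :
    IntervalIntegrable (fun r : ℝ => (c - r) ^ (β - 1)) volume a b := by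
  have h := intervalIntegral.intervalIntegrable_rpow' (a := c - a) (b := c - b)
    (r := β - 1) (by linarith)
  simpa using h.comp_sub_left c

lemma hasDerivAt_frac {β : ℝ} (hβ : β ∈ Set.Ioo (0:ℝ) 1) (g : ℝ → ℝ) (hg : ContDiff ℝ 1 g)
    (a t : ℝ) (hat : a < t) :
    HasDerivAt (fun τ => ∫ r in a..τ, g r * (τ - r) ^ (β - 1))
      (g a * (t - a) ^ (β - 1) + ∫ r in a..t, deriv g r * (t - r) ^ (β - 1)) t := by
  obtain ⟨hβ0, hβ1⟩ := hβ
  have hβ1' : β - 1 ≤ 0 := by linarith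
  set σ₀ : ℝ := t - a with hσ₀
  have hσ₀pos : 0 < σ₀ := by rw [hσ₀]; linarith
  have hg_cont := hg.continuous
  have hg'_cont : Continuous (deriv g) := hg.continuous_deriv le_rfl
  have hker : ∀ x y : ℝ, IntervalIntegrable (fun u : ℝ => u ^ (β - 1)) volume x y :=
    fun x y => intervalIntegral.intervalIntegrable_rpow' (by linarith)
  set ψ : ℝ → ℝ → ℝ := fun σ u => g (σ + a - u) * u ^ (β - 1) with hψdef
  have hψint : ∀ σ x y : ℝ, IntervalIntegrable (ψ σ) volume x y := by
    intro σ x y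
    exact (hker x y).continuousOn_mul
      ((hg_cont.comp (by continuity : Continuous fun u : ℝ => σ + a - u)).continuousOn)
  -- part A : fixed endpoints 0..σ₀
  obtain ⟨M, hM⟩ := (isCompact_Icc (a := a - 1) (b := σ₀ + a + 1)).exists_bound_of_continuousOn
    hg'_cont.continuousOn
  have hpartA : HasDerivAt (fun σ => ∫ u in (0:ℝ)..σ₀, ψ σ u)
      (∫ u in (0:ℝ)..σ₀, deriv g (σ₀ + a - u) * u ^ (β - 1)) σ₀ := by
    have := intervalIntegral.hasDerivAt_integral_of_dominated_loc_of_deriv_le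
      (F := ψ) (F' := fun σ u => deriv g (σ + a - u) * u ^ (β - 1))
      (x₀ := σ₀) (a := 0) (b := σ₀) (bound := fun u => M * ‖u ^ (β - 1)‖) (μ := volume)
      (s := Metric.ball σ₀ 1) (Metric.ball_mem_nhds σ₀ one_pos)
      (Filter.Eventually.of_forall fun σ =>
        (((hg_cont.comp (by continuity : Continuous fun u : ℝ => σ + a - u)).measurable).mul
          (measurable_rpow_const' (β - 1))).aestronglyMeasurable)
      (hψint σ₀ 0 σ₀)
      ((((hg'_cont.comp (by continuity : Continuous fun u : ℝ => σ₀ + a - u)).measurable).mul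
          (measurable_rpow_const' (β - 1))).aestronglyMeasurable)
      ?_ (((hker 0 σ₀).norm).const_mul M) ?_
    · exact this.2
    · refine Filter.Eventually.of_forall fun u hu σ hσ => ?_
      rw [Set.uIoc_of_le hσ₀pos.le] at hu
      have hσ' : |σ - σ₀| < 1 := by simpa [Real.dist_eq] using hσ
      have h1 := abs_lt.1 hσ'
      have hmem : σ + a - u ∈ Set.Icc (a - 1) (σ₀ + a + 1) :=
        ⟨by have := hu.2; linarith [h1.1], by have := hu.1; linarith [h1.2]⟩
      calc ‖deriv g (σ + a - u) * u ^ (β - 1)‖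
          = ‖deriv g (σ + a - u)‖ * ‖u ^ (β - 1)‖ := norm_mul _ _
        _ ≤ M * ‖u ^ (β - 1)‖ :=
            mul_le_mul_of_nonneg_right (hM _ hmem) (norm_nonneg _)
    · refine Filter.Eventually.of_forall fun u hu σ hσ => ?_
      have hinner : HasDerivAt (fun σ : ℝ => σ + a - u) 1 σ := by
        simpa using ((hasDerivAt_id σ).add_const a).sub_const u
      have hgd : HasDerivAt g (deriv g (σ + a - u)) (σ + a - u) :=
        ((hg.differentiable one_ne_zero) _).hasDerivAt
      have := (hgd.comp σ hinner).mul_const (u ^ (β - 1))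
      simpa [Function.comp] using this
  -- part B : moving endpoint σ₀..σ
  have hpartB : HasDerivAt (fun σ => ∫ u in σ₀..σ, ψ σ u) (g a * σ₀ ^ (β - 1)) σ₀ := by
    obtain ⟨K, s₀, hs₀, hK⟩ := (hg.contDiffAt (x := a)).exists_lipschitzOnWith
    obtain ⟨δ, hδ, hball⟩ := Metric.mem_nhds_iff.1 hs₀
    set ε : ℝ := min (σ₀ / 2) (δ / 2) with hε_def
    have hε : 0 < ε := lt_min (by linarith) (by linarith)
    have hεσ : ε ≤ σ₀ / 2 := min_le_left _ _
    have hεδ : ε ≤ δ / 2 := min_le_right _ _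
    have key : HasDerivAt (fun σ => ∫ u in σ₀..σ, ψ σ u) (ψ σ₀ σ₀) σ₀ := by
      refine hasDerivAt_boundary ψ σ₀ (K * (σ₀ / 2) ^ (β - 1)) ε hε ?_ ?_
      · -- joint continuity on ball (σ₀, σ₀) ε
        refine ContinuousOn.mul ?_ ?_
        · exact (hg_cont.comp (by continuity :
            Continuous fun p : ℝ × ℝ => p.1 + a - p.2)).continuousOn
        · intro p hp
          have hp2 : σ₀ / 2 < p.2 := by
            rw [Metric.mem_ball, Prod.dist_eq] at hp
            have := lt_of_le_of_lt (le_max_right _ _) hp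
            rw [Real.dist_eq] at this
            have := (abs_lt.1 this).1
            linarith [hεσ]
          refine ContinuousAt.continuousWithinAt ?_
          exact (Real.continuousAt_rpow_const p.2 (β - 1)
            (Or.inl (by linarith))).comp continuous_snd.continuousAt
      · intro σ hσ u hu
        have hσ' : |σ - σ₀| < ε := by simpa [Real.dist_eq] using hσ
        have hu' : |u - σ₀| ≤ |σ - σ₀| := uIcc_abs_le (Set.uIoc_subset_uIcc hu)
        have hu2 : σ₀ / 2 ≤ u := by
          have := (abs_le.1 hu').1
          linarith [hεσ, (abs_lt.1 hσ').1]
        have hupos : 0 < u := by linarith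
        have hmem1 : σ + a - u ∈ s₀ := by
          apply hball
          rw [Metric.mem_ball, Real.dist_eq]
          have : |σ + a - u - a| = |(σ - σ₀) + (σ₀ - u)| := by ring_nf
          rw [this]
          calc |(σ - σ₀) + (σ₀ - u)| ≤ |σ - σ₀| + |σ₀ - u| := abs_add_le _ _
            _ < ε + ε := by
                have : |σ₀ - u| ≤ |σ - σ₀| := by rwa [abs_sub_comm] at hu'
                linarith [lt_of_le_of_lt this hσ']
            _ ≤ δ := by linarith [hεδ]
        have hmem2 : σ₀ + a - u ∈ s₀ := by
          apply hball
          rw [Metric.mem_ball, Real.dist_eq]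
          have : |σ₀ + a - u - a| = |σ₀ - u| := by ring_nf
          rw [this]
          have h2 : |σ₀ - u| ≤ |σ - σ₀| := by rwa [abs_sub_comm] at hu'
          linarith [lt_of_le_of_lt h2 hσ', hεδ]
        have hgl := hK.dist_le_mul _ hmem1 _ hmem2
        rw [Real.dist_eq, Real.dist_eq] at hgl
        have hdist : |σ + a - u - (σ₀ + a - u)| = |σ - σ₀| := by ring_nf
        rw [hdist] at hgl
        have hrpow_le : u ^ (β - 1) ≤ (σ₀ / 2) ^ (β - 1) :=
          Real.rpow_le_rpow_of_nonpos (by linarith) hu2 hβ1'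
        have hrpow_nonneg : (0:ℝ) ≤ u ^ (β - 1) := Real.rpow_nonneg hupos.le _
        calc |ψ σ u - ψ σ₀ u| = |(g (σ + a - u) - g (σ₀ + a - u)) * u ^ (β - 1)| := by
              rw [hψdef]; ring_nf
          _ = |g (σ + a - u) - g (σ₀ + a - u)| * u ^ (β - 1) := by
              rw [abs_mul, abs_of_nonneg hrpow_nonneg]
          _ ≤ (K * |σ - σ₀|) * (σ₀ / 2) ^ (β - 1) := by
              apply mul_le_mul hgl hrpow_le hrpow_nonneg
              positivity
          _ = K * (σ₀ / 2) ^ (β - 1) * |σ - σ₀| := by ring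
    simpa [hψdef] using key
  -- combine into Φ
  have hΦ : HasDerivAt (fun σ => ∫ u in (0:ℝ)..σ, ψ σ u)
      ((∫ u in (0:ℝ)..σ₀, deriv g (σ₀ + a - u) * u ^ (β - 1)) + g a * σ₀ ^ (β - 1)) σ₀ := by
    have heq : (fun σ => ∫ u in (0:ℝ)..σ, ψ σ u)
        = fun σ => (∫ u in (0:ℝ)..σ₀, ψ σ u) + ∫ u in σ₀..σ, ψ σ u := by
      funext σ
      rw [intervalIntegral.integral_add_adjacent_intervals (hψint σ 0 σ₀) (hψint σ σ₀ σ)]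
    rw [heq]
    exact hpartA.add hpartB
  -- chain rule
  have hchain : HasDerivAt (fun τ => ∫ u in (0:ℝ)..(τ - a), ψ (τ - a) u)
      (((∫ u in (0:ℝ)..σ₀, deriv g (σ₀ + a - u) * u ^ (β - 1)) + g a * σ₀ ^ (β - 1)) * 1) t := by
    exact HasDerivAt.comp t (by rwa [hσ₀] at hΦ) ((hasDerivAt_id t).sub_const a)
  -- identify the function
  have hfun : (fun τ => ∫ r in a..τ, g r * (τ - r) ^ (β - 1))
      = fun τ => ∫ u in (0:ℝ)..(τ - a), ψ (τ - a) u := by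
    funext τ
    have h1 : (∫ r in a..τ, g r * (τ - r) ^ (β - 1))
        = ∫ r in a..τ, (fun u => g (τ - u) * u ^ (β - 1)) (τ - r) := by
      refine intervalIntegral.integral_congr fun r _ => ?_
      simp [sub_sub_cancel]
    rw [h1, intervalIntegral.integral_comp_sub_left (fun u => g (τ - u) * u ^ (β - 1)) τ]
    simp only [sub_self]
    refine intervalIntegral.integral_congr fun u _ => ?_
    rw [hψdef]
    simp [sub_add_cancel]
  -- identify the derivative value
  have hval : ((∫ u in (0:ℝ)..σ₀, deriv g (σ₀ + a - u) * u ^ (β - 1)) + g a * σ₀ ^ (β - 1)) * 1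
      = g a * (t - a) ^ (β - 1) + ∫ r in a..t, deriv g r * (t - r) ^ (β - 1) := by
    rw [mul_one, add_comm]
    congr 1
    have h1 : (∫ r in a..t, deriv g r * (t - r) ^ (β - 1))
        = ∫ r in a..t, (fun u => deriv g (t - u) * u ^ (β - 1)) (t - r) := by
      refine intervalIntegral.integral_congr fun r _ => ?_
      simp [sub_sub_cancel]
    rw [h1, intervalIntegral.integral_comp_sub_left (fun u => deriv g (t - u) * u ^ (β - 1)) t]
    simp only [sub_self]
    rw [← hσ₀]
    refine intervalIntegral.integral_congr fun u _ => ?_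
    have : σ₀ + a - u = t - u := by rw [hσ₀]; ring
    rw [this]
  rw [hfun]
  rw [hval] at hchain
  exact hchain

lemma fubini_triangle {β : ℝ} (hβ : β ∈ Set.Ioo (0:ℝ) 1) {τ : ℝ} (hτ : 0 < τ)
    (w : ℝ → ℝ → ℝ) (hw : Continuous (fun p : ℝ × ℝ => w p.1 p.2)) :
    IntegrableOn (fun s => ∫ r in s..τ, w r s * (τ - r) ^ (β - 1)) (Set.Ioc 0 τ) volume ∧
    (∫ s in (0:ℝ)..τ, ∫ r in s..τ, w r s * (τ - r) ^ (β - 1))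
      = ∫ r in (0:ℝ)..τ, (∫ s in (0:ℝ)..r, w r s) * (τ - r) ^ (β - 1) := by
  obtain ⟨hβ0, hβ1⟩ := hβ
  set μ : Measure ℝ := volume.restrict (Set.Ioc 0 τ) with hμ
  set f : ℝ → ℝ → ℝ := fun s r => if s < r then w r s * (τ - r) ^ (β - 1) else 0 with hf
  -- measurability
  have hmeas : Measurable (Function.uncurry f) := by
    refine Measurable.ite (measurableSet_lt measurable_fst measurable_snd) ?_ measurable_const
    exact ((hw.comp continuous_swap).measurable).mul
      ((measurable_rpow_const' (β - 1)).comp (measurable_const.sub measurable_snd))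
  -- bound
  obtain ⟨M, hM⟩ := (isCompact_Icc.prod (isCompact_Icc (a := (0:ℝ)) (b := τ))).exists_bound_of_continuousOn
    hw.continuousOn
  have hM0 : 0 ≤ M := le_trans (norm_nonneg _) (hM (0, 0) (by constructor <;> exact ⟨le_refl 0, hτ.le⟩))
  have hker_int : IntegrableOn (fun r : ℝ => (τ - r) ^ (β - 1)) (Set.Ioc 0 τ) volume := by
    rw [← intervalIntegrable_iff_integrableOn_Ioc_of_le hτ.le]
    exact ker_intervalIntegrable hβ0 τ 0 τ
  have hdom : Integrable (fun p : ℝ × ℝ => M * (τ - p.2) ^ (β - 1)) (μ.prod μ) := by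
    have h1 : Integrable (fun _ : ℝ => M) μ := integrable_const M
    exact h1.mul_prod hker_int
  have hint : Integrable (Function.uncurry f) (μ.prod μ) := by
    refine Integrable.mono' hdom hmeas.aestronglyMeasurable ?_
    rw [hμ, Measure.prod_restrict]
    refine (MeasureTheory.ae_restrict_iff' (measurableSet_Ioc.prod measurableSet_Ioc)).2 ?_
    refine Filter.Eventually.of_forall fun p hp => ?_
    have hker_nonneg : (0:ℝ) ≤ (τ - p.2) ^ (β - 1) :=
      Real.rpow_nonneg (by linarith [hp.2.2]) _
    rw [hf]
    by_cases h : p.1 < p.2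
    · simp only [Function.uncurry, h, if_true]
      calc ‖w p.2 p.1 * (τ - p.2) ^ (β - 1)‖
          = ‖w p.2 p.1‖ * ‖(τ - p.2) ^ (β - 1)‖ := norm_mul _ _
        _ ≤ M * ‖(τ - p.2) ^ (β - 1)‖ := by
            refine mul_le_mul_of_nonneg_right ?_ (norm_nonneg _)
            exact hM (p.2, p.1) ⟨⟨hp.2.1.le, hp.2.2⟩, ⟨hp.1.1.le, hp.1.2⟩⟩
        _ = M * (τ - p.2) ^ (β - 1) := by
            rw [Real.norm_eq_abs, abs_of_nonneg hker_nonneg]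
    · simp only [Function.uncurry, h, if_false]
      simp only [norm_zero]
      positivity
  -- inner integral identifications
  have hinnerL : ∀ s ∈ Set.Ioc (0:ℝ) τ,
      (∫ r, f s r ∂μ) = ∫ r in s..τ, w r s * (τ - r) ^ (β - 1) := by
    intro s hs
    have h1 : (fun r => f s r) = Set.indicator (Set.Ioi s) (fun r => w r s * (τ - r) ^ (β - 1)) := by
      funext r
      rw [hf, Set.indicator_apply]
      simp [Set.mem_Ioi]
    rw [h1, MeasureTheory.integral_indicator measurableSet_Ioi]
    rw [hμ, Measure.restrict_restrict measurableSet_Ioi]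
    have h2 : Set.Ioi s ∩ Set.Ioc 0 τ = Set.Ioc s τ := by
      ext r
      simp only [Set.mem_inter_iff, Set.mem_Ioi, Set.mem_Ioc]
      constructor
      · rintro ⟨h3, h4, h5⟩; exact ⟨h3, h5⟩
      · rintro ⟨h3, h4⟩; exact ⟨h3, lt_trans hs.1 h3, h4⟩
    rw [h2, intervalIntegral.integral_of_le hs.2]
  have hinnerR : ∀ r ∈ Set.Ioc (0:ℝ) τ,
      (∫ s, f s r ∂μ) = (∫ s in (0:ℝ)..r, w r s) * (τ - r) ^ (β - 1) := by
    intro r hr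
    have h1 : (fun s => f s r)
        = fun s => (Set.indicator (Set.Iio r) (fun s => w r s)) s * (τ - r) ^ (β - 1) := by
      funext s
      rw [hf, Set.indicator_apply]
      by_cases h : s < r <;> simp [h, Set.mem_Iio]
    rw [h1, MeasureTheory.integral_mul_const]
    congr 1
    rw [MeasureTheory.integral_indicator measurableSet_Iio]
    rw [hμ, Measure.restrict_restrict measurableSet_Iio]
    have h2 : Set.Iio r ∩ Set.Ioc 0 τ = Set.Ioo 0 r := by
      ext s
      simp only [Set.mem_inter_iff, Set.mem_Iio, Set.mem_Ioo, Set.mem_Ioc]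
      constructor
      · rintro ⟨h3, h4, h5⟩; exact ⟨h4, h3⟩
      · rintro ⟨h3, h4⟩; exact ⟨h4, h3, le_trans h4.le hr.2⟩
    rw [h2, intervalIntegral.integral_of_le hr.1.le, MeasureTheory.integral_Ioc_eq_integral_Ioo]
  constructor
  · -- integrability of inner integral
    have h1 : Integrable (fun s => ∫ r, f s r ∂μ) μ := by
      have := hint.integral_prod_left
      simpa [Function.uncurry] using this
    refine (h1.congr ?_ : Integrable _ μ)
    refine (MeasureTheory.ae_restrict_iff' measurableSet_Ioc).2 ?_
    exact Filter.Eventually.of_forall fun s hs => (hinnerL s hs)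
  · -- Fubini swap
    rw [intervalIntegral.integral_of_le hτ.le, intervalIntegral.integral_of_le hτ.le]
    have hL : (∫ s in Set.Ioc 0 τ, ∫ r in s..τ, w r s * (τ - r) ^ (β - 1)) = ∫ s, (∫ r, f s r ∂μ) ∂μ := by
      refine MeasureTheory.integral_congr_ae ?_
      refine (MeasureTheory.ae_restrict_iff' measurableSet_Ioc).2 ?_
      exact Filter.Eventually.of_forall fun s hs => (hinnerL s hs).symm
    have hR : (∫ r in Set.Ioc 0 τ, (∫ s in (0:ℝ)..r, w r s) * (τ - r) ^ (β - 1)) = ∫ r, (∫ s, f s r ∂μ) ∂μ := by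
      refine MeasureTheory.integral_congr_ae ?_
      refine (MeasureTheory.ae_restrict_iff' measurableSet_Ioc).2 ?_
      exact Filter.Eventually.of_forall fun r hr => (hinnerR r hr).symm
    rw [hL, hR]
    exact MeasureTheory.integral_integral_swap hint

/-- Riemann–Liouville derivative of order `1-β` (for `β ∈ (0,1)`) with lower terminal `a`:
`D_t^{1-β} g(t) = (1/Γ(β)) d/dt ∫_a^t g(r) (t-r)^{β-1} dr`. -/
noncomputable def RLderivLower (β : ℝ) (g : ℝ → ℝ) (a t : ℝ) : ℝ :=
  deriv (fun τ => (1 / Real.Gamma β) * ∫ r in a..τ, g r * (τ - r) ^ (β - 1)) t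

/-- Differentiation under the integral in the fractional Duhamel proof: for `β ∈ (0,1)`
and smooth `v(t;s)` with diagonal value `v(s;s) = F(s)`, the function
`u(t) = ∫_0^t D_t^{1-β} v(t;s) ds` satisfies
`u'(t) = D_t^{1-β} F(t) + ∫_0^t D_t^{1-β} ∂_t v(t;s) ds`. -/
theorem duhamel_diff_under_integral (β T : ℝ) (hβ : β ∈ Set.Ioo (0:ℝ) 1) (hT : 0 < T)
    (v : ℝ → ℝ → ℝ) (F : ℝ → ℝ)
    (hv : ContDiff ℝ (⊤ : ℕ∞) (fun p : ℝ × ℝ => v p.1 p.2))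
    (hF : ∀ t, F t = v t t) :
    let u : ℝ → ℝ := fun t => ∫ s in (0:ℝ)..t, RLderivLower β (fun r => v r s) s t
    ∀ t ∈ Set.Ioo (0:ℝ) T,
      deriv u t = RLderivLower β F 0 t
        + ∫ s in (0:ℝ)..t, RLderivLower β (fun r => deriv (fun τ => v τ s) r) s t := by
  intro u t ht
  obtain ⟨ht0, htT⟩ := ht
  obtain ⟨hβ0, hβ1⟩ := hβ
  have hβ' : β ∈ Set.Ioo (0:ℝ) 1 := ⟨hβ0, hβ1⟩
  set w : ℝ → ℝ → ℝ := fun r s => deriv (fun x => v x s) r with hwdef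
  have hw_smooth : ContDiff ℝ (⊤ : ℕ∞) (fun p : ℝ × ℝ => w p.1 p.2) := contDiff_deriv_fst v hv
  have hw_cont : Continuous (fun p : ℝ × ℝ => w p.1 p.2) := hw_smooth.continuous
  set wd : ℝ → ℝ → ℝ := fun x s => deriv (fun y => w y s) x with hwddef
  have hwd_smooth : ContDiff ℝ (⊤ : ℕ∞) (fun p : ℝ × ℝ => wd p.1 p.2) := contDiff_deriv_fst w hw_smooth
  have hwd_cont : Continuous (fun p : ℝ × ℝ => wd p.1 p.2) := hwd_smooth.continuous
  have hF_eq : F = fun x => v x x := funext hF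
  have hF_smooth : ContDiff ℝ 1 F := by
    rw [hF_eq]; exact (hv.comp (contDiff_id.prodMk contDiff_id)).of_le (by simp)
  set G : ℝ → ℝ := fun r => ∫ s in (0:ℝ)..r, w r s with hGdef
  set J : ℝ → ℝ := fun r => ∫ s in (0:ℝ)..r, wd r s with hJdef
  have hG_deriv : ∀ r : ℝ, HasDerivAt G (w r r + J r) r := by
    intro r
    exact hasDerivAt_param_integral w hw_smooth 0 r
  have hG_diff : Differentiable ℝ G := fun r => (hG_deriv r).differentiableAt
  have hJ_diff : Differentiable ℝ J := fun r =>
    (hasDerivAt_param_integral wd hwd_smooth 0 r).differentiableAt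
  have hG'_eq : deriv G = fun r => w r r + J r := funext fun r => (hG_deriv r).deriv
  have hG_C1 : ContDiff ℝ 1 G := by
    rw [contDiff_one_iff_deriv]
    refine ⟨hG_diff, ?_⟩
    rw [hG'_eq]
    exact (hw_cont.comp (continuous_id.prodMk continuous_id)).add hJ_diff.continuous
  have hvs_smooth : ∀ s : ℝ, ContDiff ℝ 1 (fun r => v r s) := fun s =>
    (hv.comp (contDiff_id.prodMk contDiff_const)).of_le (by simp)
  have hws_smooth : ∀ s : ℝ, ContDiff ℝ 1 (fun r => w r s) := fun s =>
    (hw_smooth.comp (contDiff_id.prodMk contDiff_const)).of_le (by simp)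
  have hRL : ∀ (g : ℝ → ℝ), ContDiff ℝ 1 g → ∀ a τ : ℝ, a < τ →
      RLderivLower β g a τ = (1 / Real.Gamma β) *
        (g a * (τ - a) ^ (β - 1) + ∫ r in a..τ, deriv g r * (τ - r) ^ (β - 1)) := by
    intro g hg a τ haτ
    exact ((hasDerivAt_frac hβ' g hg a τ haτ).const_mul (1 / Real.Gamma β)).deriv
  have hne : ∀ τ : ℝ, ∀ᵐ s : ℝ, s ≠ τ := by
    intro τ
    rw [MeasureTheory.ae_iff]
    have h : {s : ℝ | ¬ s ≠ τ} = {τ} := by ext s; simp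
    rw [h]
    exact measure_singleton τ
  -- representation of u
  have hurep : ∀ τ : ℝ, 0 < τ → u τ = (1 / Real.Gamma β) *
      ((∫ s in (0:ℝ)..τ, F s * (τ - s) ^ (β - 1)) +
        ∫ r in (0:ℝ)..τ, G r * (τ - r) ^ (β - 1)) := by
    intro τ hτ
    have hF_int : IntervalIntegrable (fun s => F s * (τ - s) ^ (β - 1)) volume 0 τ :=
      (ker_intervalIntegrable hβ0 τ 0 τ).continuousOn_mul hF_smooth.continuous.continuousOn
    obtain ⟨hI_int, hswap⟩ := fubini_triangle hβ' hτ w hw_cont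
    have hI_int' : IntervalIntegrable
        (fun s => ∫ r in s..τ, w r s * (τ - r) ^ (β - 1)) volume 0 τ := by
      rw [intervalIntegrable_iff_integrableOn_Ioc_of_le hτ.le]; exact hI_int
    have hcongr : ∀ᵐ s ∂(volume : Measure ℝ), s ∈ Set.uIoc (0:ℝ) τ →
        RLderivLower β (fun r => v r s) s τ =
        (1 / Real.Gamma β) *
          (F s * (τ - s) ^ (β - 1) + ∫ r in s..τ, w r s * (τ - r) ^ (β - 1)) := by
      filter_upwards [hne τ] with s hsne hs
      rw [Set.uIoc_of_le hτ.le] at hs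
      have hsτ : s < τ := lt_of_le_of_ne hs.2 hsne
      rw [hRL (fun r => v r s) (hvs_smooth s) s τ hsτ]
      have h1 : ∀ r : ℝ, deriv (fun x => v x s) r = w r s := fun r => rfl
      simp only [h1, hF s]
    have hmain : u τ = (1 / Real.Gamma β) * ∫ s in (0:ℝ)..τ,
        (F s * (τ - s) ^ (β - 1) + ∫ r in s..τ, w r s * (τ - r) ^ (β - 1)) := by
      show (∫ s in (0:ℝ)..τ, RLderivLower β (fun r => v r s) s τ) = _
      rw [intervalIntegral.integral_congr_ae hcongr, intervalIntegral.integral_const_mul]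
    rw [hmain, intervalIntegral.integral_add hF_int hI_int', hswap]
  -- derivative of u
  have hA := hasDerivAt_frac hβ' F hF_smooth 0 t ht0
  have hB := hasDerivAt_frac hβ' G hG_C1 0 t ht0
  have hu_ev : u =ᶠ[𝓝 t] fun τ => (1 / Real.Gamma β) *
      ((∫ s in (0:ℝ)..τ, F s * (τ - s) ^ (β - 1)) +
        ∫ r in (0:ℝ)..τ, G r * (τ - r) ^ (β - 1)) := by
    filter_upwards [isOpen_Ioi.mem_nhds ht0] with τ hτ using hurep τ hτ
  have hderiv_u : deriv u t = (1 / Real.Gamma β) *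
      ((F 0 * (t - 0) ^ (β - 1) + ∫ r in (0:ℝ)..t, deriv F r * (t - r) ^ (β - 1)) +
        (G 0 * (t - 0) ^ (β - 1) + ∫ r in (0:ℝ)..t, deriv G r * (t - r) ^ (β - 1))) := by
    rw [hu_ev.deriv_eq]
    exact ((hA.add hB).const_mul (1 / Real.Gamma β)).deriv
  -- the target integral term
  obtain ⟨hI2_int, hswap2⟩ := fubini_triangle hβ' ht0 wd hwd_cont
  have hI2_int' : IntervalIntegrable
      (fun s => ∫ r in s..t, wd r s * (t - r) ^ (β - 1)) volume 0 t := by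
    rw [intervalIntegrable_iff_integrableOn_Ioc_of_le ht0.le]; exact hI2_int
  have hwss_int : IntervalIntegrable (fun s => w s s * (t - s) ^ (β - 1)) volume 0 t :=
    (ker_intervalIntegrable hβ0 t 0 t).continuousOn_mul
      ((hw_cont.comp (continuous_id.prodMk continuous_id)).continuousOn)
  have hJk_int : IntervalIntegrable (fun r => J r * (t - r) ^ (β - 1)) volume 0 t :=
    (ker_intervalIntegrable hβ0 t 0 t).continuousOn_mul hJ_diff.continuous.continuousOn
  have hT : (∫ s in (0:ℝ)..t, RLderivLower β (fun r => deriv (fun τ => v τ s) r) s t)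
      = (1 / Real.Gamma β) *
        ((∫ s in (0:ℝ)..t, w s s * (t - s) ^ (β - 1)) +
          ∫ r in (0:ℝ)..t, J r * (t - r) ^ (β - 1)) := by
    have hcongr2 : ∀ᵐ s ∂(volume : Measure ℝ), s ∈ Set.uIoc (0:ℝ) t →
        RLderivLower β (fun r => deriv (fun τ => v τ s) r) s t =
        (1 / Real.Gamma β) *
          (w s s * (t - s) ^ (β - 1) + ∫ r in s..t, wd r s * (t - r) ^ (β - 1)) := by
      filter_upwards [hne t] with s hsne hs
      rw [Set.uIoc_of_le ht0.le] at hs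
      have hst : s < t := lt_of_le_of_ne hs.2 hsne
      have heqf : (fun r => deriv (fun τ => v τ s) r) = fun r => w r s := rfl
      rw [heqf, hRL (fun r => w r s) (hws_smooth s) s t hst]
    rw [intervalIntegral.integral_congr_ae hcongr2, intervalIntegral.integral_const_mul,
      intervalIntegral.integral_add hwss_int hI2_int', hswap2]
  -- final assembly
  have hG0 : G 0 = 0 := intervalIntegral.integral_same
  have hsplit : (∫ r in (0:ℝ)..t, deriv G r * (t - r) ^ (β - 1))
      = (∫ r in (0:ℝ)..t, w r r * (t - r) ^ (β - 1)) +
        ∫ r in (0:ℝ)..t, J r * (t - r) ^ (β - 1) := by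
    rw [hG'_eq]
    rw [← intervalIntegral.integral_add hwss_int hJk_int]
    refine intervalIntegral.integral_congr fun r _ => ?_
    ring
  rw [hderiv_u, hT, hRL F hF_smooth 0 t ht0, hG0, hsplit]
  ring
end

section
/- H^p-estimate for the diffusion-wave solution operator on ℝ^d: let α ∈ (1,2), and suppose |E_{α,2}(−S(ξ)t^α)| ≤ C₀/(1+|ξ|²t^α) for |ξ| ≥ R and |E_{α,2}(−S(ξ)t^α)| ≤ C₀ for |ξ| < R. Then, using that ζ^{1/α}/(1+ζ) is bounded for ζ ≥ 0, the function V(·,t) with Fourier transform Ṽ(ξ,t) = t ṽ₁(ξ) E_{α,2}(−S(ξ)t^α) satisfies ‖V(·,t)‖_{H^p(ℝ^d)} ≤ C (1+t²)^{1/2} ‖v₁‖_{H^{p−2/α}(ℝ^d)} for all t ∈ [0,T]. -/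
open Real MeasureTheory Complex Matrix

/-- Complex Mittag-Leffler function `E_{β,μ}(z) = Σ_ℓ z^ℓ / Γ(βℓ+μ)`. -/
noncomputable def mittagLefflerC (β μ : ℝ) (z : ℂ) : ℂ :=
  ∑' ℓ : ℕ, z ^ ℓ / ((Real.Gamma (β * ℓ + μ) : ℝ) : ℂ)

set_option maxHeartbeats 1000000 in
/-- `H^p`-estimate for the diffusion-wave solution operator on `ℝ^d` (`α ∈ (1,2)`),
stated on the Fourier side: given the Mittag-Leffler decay bound for the multiplier
`E_{α,2}(-S(ξ)t^α)`, the solution `V(·,t)`, whose Fourier transform is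
`t ṽ₁(ξ) E_{α,2}(-S(ξ)t^α)`, satisfies
`‖V(·,t)‖_{H^p} ≤ C (1+t²)^{1/2} ‖v₁‖_{H^{p-2/α}}` for `t ∈ [0,T]`. -/
theorem diffusion_wave_Hp_bound (d : ℕ) (p α T : ℝ) (hα : α ∈ Set.Ioo (1:ℝ) 2) (hT : 0 < T)
    (A : Matrix (Fin d) (Fin d) ℝ) (hA : A.IsSymm) (hApd : A.PosDef)
    (b : EuclideanSpace ℝ (Fin d)) (c : ℝ)
    (S : EuclideanSpace ℝ (Fin d) → ℂ)
    (hS : ∀ ξ : EuclideanSpace ℝ (Fin d),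
      S ξ = ((A.mulVec ξ ⬝ᵥ ξ : ℝ) : ℂ)
        + Complex.I * ((dotProduct b ξ : ℝ) : ℂ) + (c : ℂ))
    (R C₀ : ℝ) (hR : 0 < R) (hC₀ : 0 < C₀)
    (hML_far : ∀ t ∈ Set.Icc (0:ℝ) T, ∀ ξ : EuclideanSpace ℝ (Fin d), R ≤ ‖ξ‖ →
      ‖mittagLefflerC α 2 (-(S ξ) * ((t ^ α : ℝ) : ℂ))‖ ≤ C₀ / (1 + ‖ξ‖ ^ 2 * t ^ α))
    (hML_near : ∀ t ∈ Set.Icc (0:ℝ) T, ∀ ξ : EuclideanSpace ℝ (Fin d), ‖ξ‖ < R →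
      ‖mittagLefflerC α 2 (-(S ξ) * ((t ^ α : ℝ) : ℂ))‖ ≤ C₀)
    (v₁hat : EuclideanSpace ℝ (Fin d) → ℂ)
    (hv₁ : Integrable (fun ξ : EuclideanSpace ℝ (Fin d) =>
      (1 + ‖ξ‖ ^ 2) ^ (p - 2 / α) * ‖v₁hat ξ‖ ^ 2)) :
    ∃ C > 0, ∀ t ∈ Set.Icc (0:ℝ) T,
      (∫ ξ : EuclideanSpace ℝ (Fin d),
          (1 + ‖ξ‖ ^ 2) ^ p
            * ‖(t : ℂ) * v₁hat ξ
                * mittagLefflerC α 2 (-(S ξ) * ((t ^ α : ℝ) : ℂ))‖ ^ 2) ^ (1/2 : ℝ)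
        ≤ C * (1 + t ^ 2) ^ (1/2 : ℝ)
            * (∫ ξ : EuclideanSpace ℝ (Fin d),
                (1 + ‖ξ‖ ^ 2) ^ (p - 2 / α) * ‖v₁hat ξ‖ ^ 2) ^ (1/2 : ℝ) := by
  obtain ⟨hα1, hα2⟩ := hα
  have hαpos : (0:ℝ) < α := by linarith
  have hTα : (0:ℝ) ≤ T ^ α := Real.rpow_nonneg hT.le α
  have hinvα : 1/α ≤ 1 := by rw [div_le_one hαpos]; linarith
  have hinvα0 : (0:ℝ) ≤ 1/α := by positivity
  refine ⟨C₀ * (1 + R^2) * (1 + T^α) * (1 + T), by positivity, ?_⟩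
  set C := C₀ * (1 + R^2) * (1 + T^α) * (1 + T) with hCdef
  have hC0 : 0 < C := by positivity
  intro t ht
  obtain ⟨ht0, htT⟩ := ht
  have htα : (0:ℝ) ≤ t ^ α := Real.rpow_nonneg ht0 α
  -- key pointwise bound
  have key : ∀ ξ : EuclideanSpace ℝ (Fin d),
      (1 + ‖ξ‖ ^ 2) ^ (1/α)
        * (t * ‖mittagLefflerC α 2 (-(S ξ) * ((t ^ α : ℝ) : ℂ))‖) ≤ C := by
    intro ξ
    set En := ‖mittagLefflerC α 2 (-(S ξ) * ((t ^ α : ℝ) : ℂ))‖ with hEn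
    have hE0 : 0 ≤ En := norm_nonneg _
    have hx0 : (0:ℝ) ≤ ‖ξ‖ ^ 2 := by positivity
    have hx1 : (1:ℝ) ≤ 1 + ‖ξ‖ ^ 2 := by linarith
    rcases lt_or_ge ‖ξ‖ R with h | h
    · have hE := hML_near t ⟨ht0, htT⟩ ξ h
      have h1 : (1 + ‖ξ‖ ^ 2) ^ (1/α) ≤ 1 + R ^ 2 := by
        calc (1 + ‖ξ‖ ^ 2) ^ (1/α) ≤ (1 + ‖ξ‖ ^ 2) ^ (1:ℝ) :=
              Real.rpow_le_rpow_of_exponent_le hx1 hinvα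
          _ = 1 + ‖ξ‖ ^ 2 := Real.rpow_one _
          _ ≤ 1 + R ^ 2 := by nlinarith [norm_nonneg ξ]
      have h2 : t * En ≤ T * C₀ := mul_le_mul htT hE hE0 hT.le
      calc (1 + ‖ξ‖ ^ 2) ^ (1/α) * (t * En) ≤ (1 + R ^ 2) * (T * C₀) :=
            mul_le_mul h1 h2 (by positivity) (by positivity)
        _ ≤ C := by
            have hTle : T ≤ (1 + T ^ α) * (1 + T) := by nlinarith
            calc (1 + R ^ 2) * (T * C₀) = (C₀ * (1 + R ^ 2)) * T := by ring
              _ ≤ (C₀ * (1 + R ^ 2)) * ((1 + T ^ α) * (1 + T)) :=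
                  mul_le_mul_of_nonneg_left hTle (by positivity)
              _ = C := by rw [hCdef]; ring
    · have hE := hML_far t ⟨ht0, htT⟩ ξ h
      have hD : (0:ℝ) < 1 + ‖ξ‖ ^ 2 * t ^ α := by positivity
      have hζ0 : (0:ℝ) ≤ (1 + ‖ξ‖ ^ 2) * t ^ α := by positivity
      have hrw : (1 + ‖ξ‖ ^ 2) ^ (1/α) * t = ((1 + ‖ξ‖ ^ 2) * t ^ α) ^ (1/α) := by
        rw [Real.mul_rpow (by positivity) htα, ← Real.rpow_mul ht0,
          mul_one_div_cancel hαpos.ne', Real.rpow_one]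
      have hζ : ((1 + ‖ξ‖ ^ 2) * t ^ α) ^ (1/α)
          ≤ (1 + T ^ α) * (1 + ‖ξ‖ ^ 2 * t ^ α) := by
        have h1 : ((1 + ‖ξ‖ ^ 2) * t ^ α) ^ (1/α) ≤ 1 + (1 + ‖ξ‖ ^ 2) * t ^ α := by
          rcases le_or_gt ((1 + ‖ξ‖ ^ 2) * t ^ α) 1 with hle | hlt
          · have := Real.rpow_le_one hζ0 hle hinvα0; linarith
          · have h2 := Real.rpow_le_rpow_of_exponent_le hlt.le hinvα
            rw [Real.rpow_one] at h2; linarith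
        have h2 : t ^ α ≤ T ^ α := Real.rpow_le_rpow ht0 htT hαpos.le
        nlinarith [mul_nonneg hTα (mul_nonneg hx0 htα)]
      calc (1 + ‖ξ‖ ^ 2) ^ (1/α) * (t * En)
          = ((1 + ‖ξ‖ ^ 2) * t ^ α) ^ (1/α) * En := by rw [← hrw]; ring
        _ ≤ ((1 + T ^ α) * (1 + ‖ξ‖ ^ 2 * t ^ α)) * (C₀ / (1 + ‖ξ‖ ^ 2 * t ^ α)) :=
            mul_le_mul hζ hE hE0 (by positivity)
        _ = (1 + T ^ α) * C₀ := by field_simp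
        _ ≤ C := by
            have h1 : (1:ℝ) ≤ (1 + R ^ 2) * (1 + T) := by nlinarith [sq_nonneg R, hT.le]
            calc (1 + T ^ α) * C₀ = (C₀ * (1 + T ^ α)) * 1 := by ring
              _ ≤ (C₀ * (1 + T ^ α)) * ((1 + R ^ 2) * (1 + T)) :=
                  mul_le_mul_of_nonneg_left h1 (by positivity)
              _ = C := by rw [hCdef]; ring
  -- squared pointwise bound
  have hpt : ∀ ξ : EuclideanSpace ℝ (Fin d),
      (1 + ‖ξ‖ ^ 2) ^ p
          * ‖(t : ℂ) * v₁hat ξ * mittagLefflerC α 2 (-(S ξ) * ((t ^ α : ℝ) : ℂ))‖ ^ 2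
        ≤ C ^ 2 * ((1 + ‖ξ‖ ^ 2) ^ (p - 2 / α) * ‖v₁hat ξ‖ ^ 2) := by
    intro ξ
    set En := ‖mittagLefflerC α 2 (-(S ξ) * ((t ^ α : ℝ) : ℂ))‖ with hEn
    have hx1 : (0:ℝ) < 1 + ‖ξ‖ ^ 2 := by positivity
    have hnorm : ‖(t : ℂ) * v₁hat ξ * mittagLefflerC α 2 (-(S ξ) * ((t ^ α : ℝ) : ℂ))‖
        = t * ‖v₁hat ξ‖ * En := by
      rw [hEn, norm_mul, norm_mul, Complex.norm_real, Real.norm_eq_abs, _root_.abs_of_nonneg ht0]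
    have hsplit : (1 + ‖ξ‖ ^ 2) ^ p
        = (1 + ‖ξ‖ ^ 2) ^ (p - 2 / α) * ((1 + ‖ξ‖ ^ 2) ^ (1/α)) ^ 2 := by
      rw [← Real.rpow_natCast ((1 + ‖ξ‖ ^ 2) ^ (1/α)) 2, ← Real.rpow_mul hx1.le,
        ← Real.rpow_add hx1]
      congr 1
      push_cast
      field_simp
      ring
    have hb0 : 0 ≤ (1 + ‖ξ‖ ^ 2) ^ (1/α) * (t * En) :=
      mul_nonneg (Real.rpow_nonneg hx1.le _) (mul_nonneg ht0 (norm_nonneg _))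
    calc (1 + ‖ξ‖ ^ 2) ^ p
          * ‖(t : ℂ) * v₁hat ξ * mittagLefflerC α 2 (-(S ξ) * ((t ^ α : ℝ) : ℂ))‖ ^ 2
        = ((1 + ‖ξ‖ ^ 2) ^ (1/α) * (t * En)) ^ 2
            * ((1 + ‖ξ‖ ^ 2) ^ (p - 2 / α) * ‖v₁hat ξ‖ ^ 2) := by
          rw [hnorm, hsplit]; ring
      _ ≤ C ^ 2 * ((1 + ‖ξ‖ ^ 2) ^ (p - 2 / α) * ‖v₁hat ξ‖ ^ 2) := by
          have := pow_le_pow_left₀ hb0 (key ξ) 2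
          have hnn : (0:ℝ) ≤ (1 + ‖ξ‖ ^ 2) ^ (p - 2 / α) * ‖v₁hat ξ‖ ^ 2 := by positivity
          exact mul_le_mul_of_nonneg_right this hnn
  -- integrate
  have hg : Integrable (fun ξ : EuclideanSpace ℝ (Fin d) =>
      C ^ 2 * ((1 + ‖ξ‖ ^ 2) ^ (p - 2 / α) * ‖v₁hat ξ‖ ^ 2)) := hv₁.const_mul _
  have hmono : (∫ ξ : EuclideanSpace ℝ (Fin d),
        (1 + ‖ξ‖ ^ 2) ^ p
          * ‖(t : ℂ) * v₁hat ξ * mittagLefflerC α 2 (-(S ξ) * ((t ^ α : ℝ) : ℂ))‖ ^ 2)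
      ≤ ∫ ξ : EuclideanSpace ℝ (Fin d),
          C ^ 2 * ((1 + ‖ξ‖ ^ 2) ^ (p - 2 / α) * ‖v₁hat ξ‖ ^ 2) := by
    refine integral_mono_of_nonneg (ae_of_all _ fun ξ => ?_) hg (ae_of_all _ hpt)
    positivity
  rw [integral_const_mul] at hmono
  have hIg : 0 ≤ ∫ ξ : EuclideanSpace ℝ (Fin d),
      (1 + ‖ξ‖ ^ 2) ^ (p - 2 / α) * ‖v₁hat ξ‖ ^ 2 :=
    integral_nonneg fun ξ => by positivity
  have hIf0 : 0 ≤ ∫ ξ : EuclideanSpace ℝ (Fin d),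
      (1 + ‖ξ‖ ^ 2) ^ p
        * ‖(t : ℂ) * v₁hat ξ * mittagLefflerC α 2 (-(S ξ) * ((t ^ α : ℝ) : ℂ))‖ ^ 2 :=
    integral_nonneg fun ξ => by positivity
  have h1t : (1:ℝ) ≤ (1 + t ^ 2) ^ (1/2 : ℝ) := by
    have := Real.rpow_le_rpow (by norm_num : (0:ℝ) ≤ 1)
      (by nlinarith : (1:ℝ) ≤ 1 + t ^ 2) (by norm_num : (0:ℝ) ≤ (1/2:ℝ))
    rwa [Real.one_rpow] at this
  calc (∫ ξ : EuclideanSpace ℝ (Fin d),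
        (1 + ‖ξ‖ ^ 2) ^ p
          * ‖(t : ℂ) * v₁hat ξ * mittagLefflerC α 2 (-(S ξ) * ((t ^ α : ℝ) : ℂ))‖ ^ 2)
        ^ (1/2 : ℝ)
      ≤ (C ^ 2 * ∫ ξ : EuclideanSpace ℝ (Fin d),
          (1 + ‖ξ‖ ^ 2) ^ (p - 2 / α) * ‖v₁hat ξ‖ ^ 2) ^ (1/2 : ℝ) :=
        Real.rpow_le_rpow hIf0 hmono (by norm_num)
    _ = C * (∫ ξ : EuclideanSpace ℝ (Fin d),
          (1 + ‖ξ‖ ^ 2) ^ (p - 2 / α) * ‖v₁hat ξ‖ ^ 2) ^ (1/2 : ℝ) := by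
        rw [Real.mul_rpow (by positivity) hIg, ← Real.rpow_natCast C 2,
          ← Real.rpow_mul hC0.le]
        norm_num
    _ ≤ C * (1 + t ^ 2) ^ (1/2 : ℝ) * (∫ ξ : EuclideanSpace ℝ (Fin d),
          (1 + ‖ξ‖ ^ 2) ^ (p - 2 / α) * ‖v₁hat ξ‖ ^ 2) ^ (1/2 : ℝ) := by
        nlinarith [Real.rpow_nonneg hIg (1/2 : ℝ),
          mul_nonneg hC0.le (Real.rpow_nonneg hIg (1/2 : ℝ))]
end
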